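/- For all positive integers n, ∑_{k=1}^{n} C(n,k) (-1)^{k+1} / k^3 = (1/6)(H_n)^3 + (1/2) H_n H_n^{(2)} + (1/3) H_n^{(3)}. -/

import Mathlib

/-!
Write `S_m(n) = ∑_{k=1}^n C(n,k) (-1)^(k+1) / k^m`. Pascal's rule together with the absorption
identity `C(n,k-1) / k = C(n+1,k) / (n+1)` gives `S_m(n+1) = S_m(n) + S_{m-1}(n+1) / (n+1)`,
and `S_0(n) = 1 - (1-1)^n = 1` for `n ≥ 1`. Hence `S_m(n)` is the complete homogeneous symmetric
polynomial of degree `m` in `1, 1/2, …, 1/n`, and the cases `m = 1, 2, 3`, expressed through power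
sums, follow one after the other by induction on `n`.
-/

/-- The generalized harmonic number `H_n^{(m)} = ∑_{k=1}^n 1/k^m` as a real number. -/
noncomputable def genHarmonic (m n : ℕ) : ℝ := ∑ k ∈ Finset.range n, (1 : ℝ) / ((k + 1 : ℝ)) ^ m

open Finset

noncomputable def altBinomialSum (m n : ℕ) : ℝ :=
  ∑ k ∈ Icc 1 n, (n.choose k : ℝ) * (-1) ^ (k + 1) / (k : ℝ) ^ m

theorem altBinomialSum_zero_left {n : ℕ} (hn : n ≠ 0) : altBinomialSum 0 n = 1 := by
  have h := congrArg (Int.cast : ℤ → ℝ) (Int.alternating_sum_range_choose_of_ne hn)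
  push_cast at h
  rw [range_eq_Ico, sum_eq_sum_Ico_succ_bot (Nat.succ_pos n), Nat.succ_eq_add_one, zero_add,
    Ico_add_one_right_eq_Icc] at h
  simp only [pow_zero, Nat.choose_zero_right, Nat.cast_one, mul_one] at h
  simp only [altBinomialSum, pow_zero, div_one, pow_succ, mul_neg, mul_one,
    mul_comm (n.choose _ : ℝ), neg_mul, sum_neg_distrib]
  linear_combination -h

theorem altBinomialSum_succ_succ (m n : ℕ) :
    altBinomialSum (m + 1) (n + 1) =
      altBinomialSum (m + 1) n + altBinomialSum m (n + 1) / (n + 1) := by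
  have extend : altBinomialSum (m + 1) n =
      ∑ k ∈ Icc 1 (n + 1), (n.choose k : ℝ) * (-1) ^ (k + 1) / (k : ℝ) ^ (m + 1) := by
    rw [altBinomialSum, sum_Icc_succ_top (by omega), Nat.choose_succ_self]
    simp
  rw [altBinomialSum, extend, altBinomialSum, sum_div, ← sum_add_distrib]
  refine sum_congr rfl fun k hk => ?_
  obtain ⟨j, rfl⟩ : ∃ j, k = j + 1 := ⟨k - 1, by grind⟩
  have pascal : ((n + 1).choose (j + 1) : ℝ) = n.choose j + n.choose (j + 1) := by
    exact_mod_cast Nat.choose_succ_succ' n j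
  have absorb : ((n + 1).choose (j + 1) : ℝ) * (j + 1) = (n + 1) * n.choose j := by
    exact_mod_cast (Nat.add_one_mul_choose_eq n j).symm
  have : (n : ℝ) + 1 ≠ 0 := by positivity
  push_cast
  field_simp
  linear_combination ((n + 1) * (j + 1) ^ m : ℝ) * pascal - ((j + 1) ^ m : ℝ) * absorb

theorem genHarmonic_succ (m n : ℕ) :
    genHarmonic m (n + 1) = genHarmonic m n + 1 / ((n : ℝ) + 1) ^ m :=
  sum_range_succ _ _

theorem altBinomialSum_one (n : ℕ) : altBinomialSum 1 n = genHarmonic 1 n := by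
  induction n with
  | zero => simp [altBinomialSum, genHarmonic]
  | succ n ih =>
    rw [altBinomialSum_succ_succ, altBinomialSum_zero_left n.succ_ne_zero, ih, genHarmonic_succ]
    ring

theorem altBinomialSum_two (n : ℕ) :
    altBinomialSum 2 n = (genHarmonic 1 n ^ 2 + genHarmonic 2 n) / 2 := by
  induction n with
  | zero => simp [altBinomialSum, genHarmonic]
  | succ n ih =>
    rw [altBinomialSum_succ_succ, altBinomialSum_one, ih, genHarmonic_succ, genHarmonic_succ]
    field_simp
    ring

theorem altBinomialSum_three (n : ℕ) :
    altBinomialSum 3 n =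
      genHarmonic 1 n ^ 3 / 6 + genHarmonic 1 n * genHarmonic 2 n / 2 + genHarmonic 3 n / 3 := by
  induction n with
  | zero => simp [altBinomialSum, genHarmonic]
  | succ n ih =>
    rw [altBinomialSum_succ_succ, altBinomialSum_two, ih, genHarmonic_succ, genHarmonic_succ,
      genHarmonic_succ]
    field_simp
    ring

theorem alternating_binomial_sum_cube_general (n : ℕ) :
    ∑ k ∈ Finset.Icc 1 n, (n.choose k : ℝ) * (-1) ^ (k + 1) / (k : ℝ) ^ 3 =
      (1 / 6) * (genHarmonic 1 n) ^ 3 + (1 / 2) * genHarmonic 1 n * genHarmonic 2 n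
        + (1 / 3) * genHarmonic 3 n := by
  rw [← altBinomialSum, altBinomialSum_three]
  ring

theorem alternating_binomial_sum_cube (n : ℕ) (hn : 0 < n) :
    ∑ k ∈ Finset.Icc 1 n, (n.choose k : ℝ) * (-1) ^ (k + 1) / (k : ℝ) ^ 3 =
      (1 / 6) * (genHarmonic 1 n) ^ 3 + (1 / 2) * genHarmonic 1 n * genHarmonic 2 n
        + (1 / 3) * genHarmonic 3 n :=
  alternating_binomial_sum_cube_general n
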